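/- arXiv:2111.03422 — 2 statements merged into one kernel-verified Lean document; each statement's English description precedes it below -/
import Mathlib

section
/- Population form of the generalization bound (Theorem, final chain before applying the Rademacher lemma): under the Causal Structures Discrepancy Bound Assumption, the pointwise triangle inequality, symmetry of L, and the assumption that the ideal joint predictor h^* has source risk no larger than that of h^T (L_{μ^S}(h^*, η^S) ≤ L_{μ^S}(h^T, η^S)), one has L_{μ^T}(h^T, η^T) ≤ 3K·‖A^S − A^T‖₁ + L_{μ^S}(h^S, η^S) + L_{μ^T}(h^T, η^T) − L_{μ^S}(h^*, η^S). -/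
open MeasureTheory

/-- Population form of the generalization bound (final chain before applying the
Rademacher lemma): under the Causal Structures Discrepancy Bound Assumption, the
pointwise triangle inequality, symmetry of `L`, and `L_{μS}(h*, ηS) ≤ L_{μS}(hT, ηS)`,
`L_{μT}(hT, ηT) ≤ 3K·‖AS − AT‖₁ + L_{μS}(hS, ηS) + L_{μT}(hT, ηT) − L_{μS}(h*, ηS)`. -/
theorem population_generalization_bound
    {X : Type*} [MeasurableSpace X] {Y : Type*}
    (L : Y → Y → ℝ) (hL0 : ∀ y y', 0 ≤ L y y')
    (htri : ∀ y y' y'', L y y'' ≤ L y y' + L y' y'')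
    (hsymm : ∀ y y', L y y' = L y' y)
    (μS μT : Measure X) [IsProbabilityMeasure μS] [IsProbabilityMeasure μT]
    (hS hT hstar ηS ηT : X → Y)
    {D k : ℕ} (AS AT : Fin D → Fin D → Fin k → ℝ) (K : ℝ) (hK : 0 < K)
    -- integrability of all relevant integrands
    (hint1 : Integrable (fun x => L (hS x) (ηS x)) μS)
    (hint2 : Integrable (fun x => L (hT x) (ηS x)) μS)
    (hint3 : Integrable (fun x => L (hstar x) (ηS x)) μS)
    (hint4 : Integrable (fun x => L (hS x) (hT x)) μS)
    (hint5 : Integrable (fun x => L (hT x) (hS x)) μS)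
    (hint6 : Integrable (fun x => L (hT x) (ηT x)) μT)
    (hint7 : Integrable (fun x => L (hS x) (ηT x)) μT)
    (hint8 : Integrable (fun x => L (hS x) (hT x)) μT)
    (hint9 : Integrable (fun x => L (hT x) (hS x)) μT)
    -- Causal Structures Discrepancy Bound Assumption
    (hdiscS : ∫ x, L (hS x) (hT x) ∂μS ≤
      K * ∑ i, ∑ j, ∑ l, |AS i j l - AT i j l|)
    (hdiscT : ∫ x, L (hS x) (hT x) ∂μT ≤
      K * ∑ i, ∑ j, ∑ l, |AS i j l - AT i j l|)
    -- the ideal joint predictor has source risk no larger than that of hT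
    (hideal : ∫ x, L (hstar x) (ηS x) ∂μS ≤ ∫ x, L (hT x) (ηS x) ∂μS) :
    ∫ x, L (hT x) (ηT x) ∂μT ≤
      3 * K * (∑ i, ∑ j, ∑ l, |AS i j l - AT i j l|) +
        (∫ x, L (hS x) (ηS x) ∂μS) + (∫ x, L (hT x) (ηT x) ∂μT) -
        ∫ x, L (hstar x) (ηS x) ∂μS := by
  set Δ := ∑ i, ∑ j, ∑ l, |AS i j l - AT i j l| with hΔ
  have hΔ0 : 0 ≤ Δ := Finset.sum_nonneg fun _ _ =>
    Finset.sum_nonneg fun _ _ => Finset.sum_nonneg fun _ _ => abs_nonneg _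
  have h1 : ∫ x, L (hT x) (ηS x) ∂μS ≤
      (∫ x, L (hT x) (hS x) ∂μS) + ∫ x, L (hS x) (ηS x) ∂μS := by
    rw [← integral_add hint5 hint1]
    exact integral_mono hint2 (hint5.add hint1) fun x => htri _ _ _
  have h2 : ∫ x, L (hT x) (hS x) ∂μS = ∫ x, L (hS x) (hT x) ∂μS := by
    simp only [hsymm]
  have hK0 : 0 ≤ K * Δ := mul_nonneg hK.le hΔ0
  linarith
end

section
/- Generalization bound with empirical-risk hypotheses (Theorem, conditional form): suppose the Causal Structures Discrepancy Bound Assumption holds, L satisfies the pointwise triangle inequality and is symmetric, L_{μ^S}(h^*, η^S) ≤ L_{μ^S}(h^T, η^S), and suppose real numbers E^S and E^T satisfy L_{μ^S}(h^S, η^S) ≤ E^S and L_{μ^T}(h^T, η^T) ≤ E^T (e.g., E^S and E^T are the respective empirical risks plus Rademacher-complexity and confidence terms furnished by the Rademacher regression bound). Then L_{μ^T}(h^T, η^T) ≤ E^S + E^T + 3K·‖A^S − A^T‖₁ − L_{μ^S}(h^*, η^S). -/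
open MeasureTheory

/-- Generalization bound with empirical-risk hypotheses (Theorem, conditional form):
if moreover `L_{μS}(hS, ηS) ≤ ES` and `L_{μT}(hT, ηT) ≤ ET`, then
`L_{μT}(hT, ηT) ≤ ES + ET + 3K·‖AS − AT‖₁ − L_{μS}(h*, ηS)`. -/
theorem generalization_bound_empirical
    {X : Type*} [MeasurableSpace X] {Y : Type*}
    (L : Y → Y → ℝ) (hL0 : ∀ y y', 0 ≤ L y y')
    (htri : ∀ y y' y'', L y y'' ≤ L y y' + L y' y'')
    (hsymm : ∀ y y', L y y' = L y' y)
    (μS μT : Measure X) [IsProbabilityMeasure μS] [IsProbabilityMeasure μT]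
    (hS hT hstar ηS ηT : X → Y)
    {D k : ℕ} (AS AT : Fin D → Fin D → Fin k → ℝ) (K : ℝ) (hK : 0 < K)
    (ES ET : ℝ)
    -- integrability of all relevant integrands
    (hint1 : Integrable (fun x => L (hS x) (ηS x)) μS)
    (hint2 : Integrable (fun x => L (hT x) (ηS x)) μS)
    (hint3 : Integrable (fun x => L (hstar x) (ηS x)) μS)
    (hint4 : Integrable (fun x => L (hS x) (hT x)) μS)
    (hint5 : Integrable (fun x => L (hT x) (hS x)) μS)
    (hint6 : Integrable (fun x => L (hT x) (ηT x)) μT)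
    (hint7 : Integrable (fun x => L (hS x) (ηT x)) μT)
    (hint8 : Integrable (fun x => L (hS x) (hT x)) μT)
    (hint9 : Integrable (fun x => L (hT x) (hS x)) μT)
    -- Causal Structures Discrepancy Bound Assumption
    (hdiscS : ∫ x, L (hS x) (hT x) ∂μS ≤
      K * ∑ i, ∑ j, ∑ l, |AS i j l - AT i j l|)
    (hdiscT : ∫ x, L (hS x) (hT x) ∂μT ≤
      K * ∑ i, ∑ j, ∑ l, |AS i j l - AT i j l|)
    -- the ideal joint predictor has source risk no larger than that of hT
    (hideal : ∫ x, L (hstar x) (ηS x) ∂μS ≤ ∫ x, L (hT x) (ηS x) ∂μS)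
    -- empirical-risk-type upper bounds
    (hES : ∫ x, L (hS x) (ηS x) ∂μS ≤ ES)
    (hET : ∫ x, L (hT x) (ηT x) ∂μT ≤ ET) :
    ∫ x, L (hT x) (ηT x) ∂μT ≤
      ES + ET + 3 * K * (∑ i, ∑ j, ∑ l, |AS i j l - AT i j l|) -
        ∫ x, L (hstar x) (ηS x) ∂μS := by
  set Δ := ∑ i, ∑ j, ∑ l, |AS i j l - AT i j l| with hΔdef
  have hΔ0 : 0 ≤ Δ := by
    apply Finset.sum_nonneg; intro i _
    apply Finset.sum_nonneg; intro j _
    exact Finset.sum_nonneg fun l _ => abs_nonneg _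
  have htri' : ∫ x, L (hT x) (ηS x) ∂μS ≤
      ∫ x, L (hS x) (hT x) ∂μS + ∫ x, L (hS x) (ηS x) ∂μS := by
    rw [← integral_add hint4 hint1]
    apply integral_mono hint2 (hint4.add hint1)
    intro x
    calc L (hT x) (ηS x) ≤ L (hT x) (hS x) + L (hS x) (ηS x) := htri _ _ _
      _ = L (hS x) (hT x) + L (hS x) (ηS x) := by rw [hsymm]
  nlinarith [hideal, hdiscS, hES, hET, mul_nonneg hK.le hΔ0]
end
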